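/- In the lattice K = K_p the following hold. (a) The orthogonal complement of i(N) in K, namely {y ∈ K : B(y, i(x)) = 0 for all x ∈ N}, equals ℤ·(s+f) + ℤ·f; the vectors s+f and f satisfy B(s+f, s+f) = 0, B(f,f) = 0 and B(s+f, f) = 1, so this complement is a hyperbolic plane U and K is the orthogonal direct sum of i(N) and this copy of U. (b) The lattice L is contained in K, and the orthogonal complement of L in K, namely {y ∈ K : B(y, x) = 0 for all x ∈ L}, equals ℤ·e' + ℤ·f where e' := p·s + ϱ + f; the vectors e' and f satisfy B(e', e') = 0, B(f, f) = 0 and B(e', f) = p, so this complement is a copy of U(p) (Gram matrix [[0,p],[p,0]]). -/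

import Mathlib

open scoped BigOperators

namespace Nikulin

noncomputable section

/-- Index set for the basis vectors `D_{i,j}`, `1 ≤ i ≤ ν`, `1 ≤ j ≤ p−1`. -/
abbrev Idx (p ν : ℕ) := Fin ν × Fin (p - 1)

variable (p ν : ℕ)

/-- The Gram matrix of the form `B` on the basis `D_{i,j}`:
`B(D_{i,j}, D_{i,j}) = −2`, `B(D_{i,j}, D_{i,j±1}) = 1`, all other entries `0`. -/
def gram (a b : Idx p ν) : ℚ :=
  if a.1 = b.1 then
    if a.2 = b.2 then -2
    else if a.2.1 + 1 = b.2.1 ∨ b.2.1 + 1 = a.2.1 then 1 else 0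
  else 0

/-- The symmetric bilinear form `B` on `V`, the bilinear extension of the Gram matrix. -/
def Bf : (Idx p ν → ℚ) →ₗ[ℚ] (Idx p ν → ℚ) →ₗ[ℚ] ℚ :=
  LinearMap.mk₂ ℚ (fun x y => ∑ a : Idx p ν, ∑ b : Idx p ν, x a * gram p ν a b * y b)
    (by
      intro x x' y
      rw [← Finset.sum_add_distrib]
      refine Finset.sum_congr rfl fun a _ => ?_
      rw [← Finset.sum_add_distrib]
      refine Finset.sum_congr rfl fun b _ => ?_
      simp only [Pi.add_apply]; ring)
    (by
      intro c x y
      rw [Finset.smul_sum]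
      refine Finset.sum_congr rfl fun a _ => ?_
      rw [Finset.smul_sum]
      refine Finset.sum_congr rfl fun b _ => ?_
      simp only [Pi.smul_apply, smul_eq_mul]; ring)
    (by
      intro x y y'
      rw [← Finset.sum_add_distrib]
      refine Finset.sum_congr rfl fun a _ => ?_
      rw [← Finset.sum_add_distrib]
      refine Finset.sum_congr rfl fun b _ => ?_
      simp only [Pi.add_apply]; ring)
    (by
      intro c x y
      rw [Finset.smul_sum]
      refine Finset.sum_congr rfl fun a _ => ?_
      rw [Finset.smul_sum]
      refine Finset.sum_congr rfl fun b _ => ?_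
      simp only [Pi.smul_apply, smul_eq_mul]; ring)

/-- The basis vector `D_{i,j}` (the index `q = (i, j)` with `j ∈ Fin (p−1)` representing
`j+1 ∈ {1, …, p−1}`). -/
def Dv (q : Idx p ν) : Idx p ν → ℚ := Pi.single q 1

variable (k : Fin ν → ℤ)

/-- The vector `ϖ = Σ_i (k_i/p) Σ_j j·D_{i,j}`. -/
def varpi : Idx p ν → ℚ := fun q => (k q.1 : ℚ) * ((q.2.1 : ℚ) + 1) / p

/-- The Nikulin lattice `N_p`, generated by the `D_{i,j}` together with `ϖ`. -/
def NL : AddSubgroup (Idx p ν → ℚ) :=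
  AddSubgroup.closure (Set.range (Dv p ν) ∪ {varpi p ν k})

/-- The Weyl vector `ϱ = −(1/2) Σ_i Σ_j j(p−j)·D_{i,j}`. -/
def rho : Idx p ν → ℚ :=
  fun q => -(((q.2.1 : ℚ) + 1) * ((p : ℚ) - ((q.2.1 : ℚ) + 1)) / 2)

/-- The lattice `L_p = {x ∈ N_p : B(ϱ, x) ∈ pℤ}`. -/
def LL : AddSubgroup (Idx p ν → ℚ) where
  carrier := {x | x ∈ NL p ν k ∧ ∃ m : ℤ, Bf p ν (rho p ν) x = (p : ℚ) * m}
  zero_mem' := ⟨(NL p ν k).zero_mem, 0, by simp⟩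
  add_mem' := by
    rintro a b ⟨haN, ma, hma⟩ ⟨hbN, mb, hmb⟩
    exact ⟨add_mem haN hbN, ma + mb, by rw [map_add, hma, hmb]; push_cast; ring⟩
  neg_mem' := by
    rintro a ⟨haN, ma, hma⟩
    exact ⟨neg_mem haN, -ma, by rw [map_neg, hma]; push_cast; ring⟩

/-- The dual lattice `S^∨ = {y ∈ V : B(y, s) ∈ ℤ for all s ∈ S}`. -/
def dual (S : AddSubgroup (Idx p ν → ℚ)) : AddSubgroup (Idx p ν → ℚ) where
  carrier := {y | ∀ s ∈ S, ∃ m : ℤ, Bf p ν y s = (m : ℚ)}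
  zero_mem' := by
    intro s hs
    exact ⟨0, by simp⟩
  add_mem' := by
    rintro a b ha hb s hs
    obtain ⟨ma, hma⟩ := ha s hs
    obtain ⟨mb, hmb⟩ := hb s hs
    exact ⟨ma + mb, by rw [map_add, LinearMap.add_apply, hma, hmb]; push_cast; ring⟩
  neg_mem' := by
    rintro a ha s hs
    obtain ⟨m, hm⟩ := ha s hs
    exact ⟨-m, by rw [map_neg, LinearMap.neg_apply, hm]; push_cast; ring⟩

/-- The list of admissible data `(p, ν, k)`:
`(2, 8, (1,…,1))`, `(3, 6, (1,…,1))`, `(5, 4, (1,1,2,2))`, `(7, 3, (1,2,3))`. -/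
def goodCase : Prop :=
  (p = 2 ∧ ∃ h : ν = 8, ∀ i, k i = ![1, 1, 1, 1, 1, 1, 1, 1] (Fin.cast h i)) ∨
  (p = 3 ∧ ∃ h : ν = 6, ∀ i, k i = ![1, 1, 1, 1, 1, 1] (Fin.cast h i)) ∨
  (p = 5 ∧ ∃ h : ν = 4, ∀ i, k i = ![1, 1, 2, 2] (Fin.cast h i)) ∨
  (p = 7 ∧ ∃ h : ν = 3, ∀ i, k i = ![1, 2, 3] (Fin.cast h i))

end

end Nikulin
namespace Nikulin

noncomputable section
variable (p ν : ℕ) (k : Fin ν → ℤ)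

/-- `W = V ⊕ ℚf ⊕ ℚs`. -/
abbrev Wt := (Idx p ν → ℚ) × ℚ × ℚ

/-- The bilinear extension of `B` to `W = V ⊕ ℚf ⊕ ℚs` determined by `B(f, V) = 0`,
`B(f,f) = 0`, `B(s,f) = 1`, `B(s,s) = −2` and `B(s, x) = −(1/p)·B(ϱ, x)` for `x ∈ V`. -/
def BW : Wt p ν →ₗ[ℚ] Wt p ν →ₗ[ℚ] ℚ :=
  LinearMap.mk₂ ℚ
    (fun u v => Bf p ν u.1 v.1 - (u.2.2 / p) * Bf p ν (rho p ν) v.1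
      - (v.2.2 / p) * Bf p ν (rho p ν) u.1 + u.2.1 * v.2.2 + v.2.1 * u.2.2
      - 2 * u.2.2 * v.2.2)
    (by
      intro u u' v
      simp only [Prod.fst_add, Prod.snd_add, map_add, LinearMap.add_apply]
      ring)
    (by
      intro c u v
      simp only [Prod.smul_fst, Prod.smul_snd, map_smul, LinearMap.smul_apply, smul_eq_mul]
      ring)
    (by
      intro u v v'
      simp only [Prod.fst_add, Prod.snd_add, map_add, LinearMap.add_apply]
      ring)
    (by
      intro c u v
      simp only [Prod.smul_fst, Prod.smul_snd, map_smul, LinearMap.smul_apply, smul_eq_mul]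
      ring)

/-- The vector `f ∈ W`. -/
def fvec : Wt p ν := (0, 1, 0)

/-- The vector `s ∈ W`. -/
def svec : Wt p ν := (0, 0, 1)

/-- The embedding `i : V → W`, `i(x) = x + (1/p)·B(ϱ,x)·f`. -/
def iMap (x : Idx p ν → ℚ) : Wt p ν := (x, (1 / p) * Bf p ν (rho p ν) x, 0)

/-- The inclusion `V ⊆ W`. -/
def inclV (x : Idx p ν → ℚ) : Wt p ν := (x, 0, 0)

/-- The lattice `K = K_p = i(N) + ℤf + ℤs ⊆ W`. -/
def KL : AddSubgroup (Wt p ν) :=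
  AddSubgroup.closure ((iMap p ν '' (NL p ν k : Set (Idx p ν → ℚ))) ∪ {fvec p ν, svec p ν})

/-- The isotropic vector `e' = p·s + ϱ + f`. -/
def evec : Wt p ν := (p : ℚ) • svec p ν + inclV p ν (rho p ν) + fvec p ν

end

end Nikulin

open Nikulin

/-!
Every vector of `K` is `i(x) + a s + b f` with `x ∈ N` and `a, b ∈ ℤ`, and its pairing with `i(z)`
is `B(x, z)`. Pairing `x` with `D_{i,j}` takes second differences along the `i`-th `A_{p-1}` chain,
so `B` is nondegenerate on `V`, which gives (a). For (b), `B(ϱ, D_{i,j}) = 1` puts `p D_{i,j}` in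
`L`; pairing with these forces `a = p n` and `x = n ϱ` for an integer `n`, because `B(x, D_{i,j})`
is an integer for `x ∈ N`. Finally `B(ϱ, ϱ) = -ν (p-1) p (p+1) / 12 = -2p(p-1)` as `ν (p+1) = 24`,
so `e' = i(ϱ) + p s + (2p-1) f` lies in `K` (using `ϱ ∈ N`: its coefficients are integers for odd
`p`, and `ϱ = -ϖ` for `p = 2`) and is isotropic.
-/

namespace Nikulin

variable {p ν : ℕ} {k : Fin ν → ℤ}

lemma Bf_Dv_right (x : Idx p ν → ℚ) (q : Idx p ν) :
    Bf p ν x (Dv p ν q) = ∑ a : Idx p ν, x a * gram p ν a q := by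
  simp [Bf, Dv, Pi.single_apply]

/-- Position `n` holds the coefficient of `D_{i,n}` in `x` (indexed from `1`, as in the paper,
while `Idx` indexes from `0`); positions `0` and `≥ p` hold `0`. -/
def chain (x : Idx p ν → ℚ) (i : Fin ν) (n : ℕ) : ℚ :=
  if h : 0 < n ∧ n < p then x (i, ⟨n - 1, by omega⟩) else 0

lemma chain_zero (x : Idx p ν → ℚ) (i : Fin ν) : chain x i 0 = 0 := by
  simp [chain]

lemma chain_self (x : Idx p ν → ℚ) (i : Fin ν) : chain x i p = 0 := by
  simp [chain]

lemma chain_succ (x : Idx p ν → ℚ) (q : Idx p ν) : chain x q.1 (q.2 + 1) = x q := by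
  have := q.2.2
  rw [chain, dif_pos (by omega)]
  rfl

lemma sum_ite_succ_eq_chain (x : Idx p ν → ℚ) (i : Fin ν) (c : ℕ) :
    ∑ j : Fin (p - 1), (if (j : ℕ) + 1 = c then x (i, j) else 0) = chain x i c := by
  unfold chain
  split_ifs with hc
  · rw [Finset.sum_eq_single ⟨c - 1, by omega⟩
      (fun j _ hj => if_neg fun h => hj (by ext; simp; omega)) (by simp)]
    simp only [if_pos (show c - 1 + 1 = c by omega)]
  · exact Finset.sum_eq_zero fun j _ => if_neg (by omega)

lemma gram_same_fiber (i : Fin ν) (j' j : Fin (p - 1)) :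
    gram p ν (i, j') (i, j) = (if (j' : ℕ) + 1 = j then 1 else 0)
      - (if (j' : ℕ) + 1 = j + 1 then 1 else 0) * 2 + (if (j' : ℕ) + 1 = j + 2 then 1 else 0) := by
  unfold gram
  simp only [Fin.ext_iff]
  split_ifs <;> first | omega | norm_num

lemma Bf_Dv (x : Idx p ν → ℚ) (i : Fin ν) (j : Fin (p - 1)) :
    Bf p ν x (Dv p ν (i, j)) = chain x i j - 2 * chain x i (j + 1) + chain x i (j + 2) := by
  rw [Bf_Dv_right, Fintype.sum_prod_type, Finset.sum_eq_single i
    (fun i' _ hi' => Finset.sum_eq_zero fun j' _ => by simp [gram, hi']) (by simp)]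
  simp only [gram_same_fiber, mul_add, mul_sub, ← mul_assoc, mul_boole, Finset.sum_add_distrib,
    Finset.sum_sub_distrib, ← Finset.sum_mul, sum_ite_succ_eq_chain]
  ring

lemma chain_rho (i : Fin ν) {n : ℕ} (hn : n ≤ p) :
    chain (rho p ν) i n = -((n : ℚ) * (p - n) / 2) := by
  unfold chain
  split_ifs with h
  · simp only [rho]
    rw [Nat.cast_sub (by omega), Nat.cast_one, sub_add_cancel]
  · obtain rfl | rfl : n = 0 ∨ n = p := by omega
    all_goals simp

lemma Bf_rho_Dv (q : Idx p ν) : Bf p ν (rho p ν) (Dv p ν q) = 1 := by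
  have := q.2.2
  rw [Bf_Dv, chain_rho _ (by omega), chain_rho _ (by omega), chain_rho _ (by omega)]
  push_cast
  ring

lemma chain_varpi (k : Fin ν → ℤ) (i : Fin ν) {n : ℕ} (hn : n < p) :
    chain (varpi p ν k) i n = k i * n / p := by
  unfold chain
  split_ifs with h
  · simp only [varpi]
    rw [Nat.cast_sub (by omega), Nat.cast_one, sub_add_cancel]
  · obtain rfl : n = 0 := by omega
    simp

lemma Bf_varpi_Dv (k : Fin ν → ℤ) (i : Fin ν) (j : Fin (p - 1)) :
    Bf p ν (varpi p ν k) (Dv p ν (i, j)) = if (j : ℕ) + 2 = p then -(k i : ℚ) else 0 := by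
  have := j.2
  have hp : (p : ℚ) ≠ 0 := by norm_cast; omega
  rw [Bf_Dv, chain_varpi _ _ (by omega), chain_varpi _ _ (by omega)]
  split_ifs with h
  · have hq : (p : ℚ) = j + 2 := by exact_mod_cast h.symm
    rw [h, chain_self, hq]
    field_simp
    push_cast
    ring
  · rw [chain_varpi _ _ (by omega)]
    field_simp
    push_cast
    ring

lemma eq_mul_of_second_difference_eq_zero {c : ℕ → ℚ} {N : ℕ} (h0 : c 0 = 0)
    (h : ∀ n, n + 2 ≤ N → c n - 2 * c (n + 1) + c (n + 2) = 0) :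
    ∀ n ≤ N, c n = n * c 1 := by
  have key : ∀ n, n + 1 ≤ N → c n = n * c 1 ∧ c (n + 1) = (n + 1) * c 1 := by
    intro n
    induction n with
    | zero => simp [h0]
    | succ n ih =>
      intro hn
      obtain ⟨h1, h2⟩ := ih (by omega)
      have := h n (by omega)
      refine ⟨by rw [h2]; push_cast; ring, ?_⟩
      push_cast
      linear_combination this + 2 * h2 - h1
  intro n hn
  rcases n with _ | n
  · simp [h0]
  · exact (key n hn).2.trans (by push_cast; ring)

/-- Each chain of `x` has vanishing second differences, so it is linear; as it vanishes at both
ends `0` and `p`, it is zero. -/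
lemma eq_zero_of_forall_Bf_Dv_eq_zero {x : Idx p ν → ℚ} (hx : ∀ q, Bf p ν x (Dv p ν q) = 0) :
    x = 0 := by
  funext ⟨i, j⟩
  have hj := j.2
  have hlin := eq_mul_of_second_difference_eq_zero (chain_zero x i) (N := p)
    (fun n hn => (Bf_Dv x i ⟨n, by omega⟩).symm.trans (hx _))
  have h1 : chain x i 1 = 0 := by
    have := hlin p le_rfl
    rw [chain_self] at this
    have hp : (p : ℚ) ≠ 0 := by norm_cast; omega
    exact (mul_eq_zero.mp this.symm).resolve_left hp
  rw [← chain_succ x (i, j), hlin _ (by omega), h1, mul_zero, Pi.zero_apply]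

lemma Bf_eq_sum_mul_Bf_Dv (x y : Idx p ν → ℚ) :
    Bf p ν x y = ∑ b : Idx p ν, y b * Bf p ν x (Dv p ν b) := by
  simp only [Bf_Dv_right, Finset.mul_sum]
  rw [Finset.sum_comm]
  exact Finset.sum_congr rfl fun a _ => Finset.sum_congr rfl fun b _ => by ring

lemma sum_range_succ_mul_sub_succ (c : ℚ) (m : ℕ) :
    ∑ j ∈ Finset.range m, ((j : ℚ) + 1) * (c - (j + 1)) =
      c * m * (m + 1) / 2 - m * (m + 1) * (2 * m + 1) / 6 := by
  induction m with
  | zero => simp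
  | succ m ih =>
    rw [Finset.sum_range_succ, ih]
    push_cast
    ring

lemma sum_rho_chain (i : Fin ν) :
    ∑ j : Fin (p - 1), rho p ν (i, j) = -((p - 1) * p * (p + 1) / 12 : ℚ) := by
  rcases p with _ | m
  · simp
  · simp only [rho]
    rw [Fin.sum_univ_eq_sum_range (fun j => -(((j : ℚ) + 1) * ((m + 1 : ℕ) - ((j : ℚ) + 1)) / 2)),
      Nat.add_sub_cancel, Finset.sum_neg_distrib, ← Finset.sum_div, sum_range_succ_mul_sub_succ]
    push_cast
    ring

lemma Bf_rho_rho : Bf p ν (rho p ν) (rho p ν) = -(ν * (p - 1) * p * (p + 1) / 12 : ℚ) := by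
  rw [Bf_eq_sum_mul_Bf_Dv]
  simp only [Bf_rho_Dv, mul_one, Fintype.sum_prod_type, sum_rho_chain,
    Finset.sum_const, Finset.card_univ, Fintype.card_fin, nsmul_eq_mul]
  ring

lemma Dv_mem_NL (q : Idx p ν) : Dv p ν q ∈ NL p ν k :=
  AddSubgroup.subset_closure (Or.inl ⟨q, rfl⟩)

lemma intCast_comp_mem_NL (c : Idx p ν → ℤ) : (fun q => (c q : ℚ)) ∈ NL p ν k := by
  have : (fun q => (c q : ℚ)) = ∑ q, c q • Dv p ν q := by
    ext a
    simp [Dv, Pi.single_apply]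
  rw [this]
  exact sum_mem fun q _ => zsmul_mem (Dv_mem_NL q) _

lemma exists_int_Bf_Dv_of_mem_NL {x : Idx p ν → ℚ} (hx : x ∈ NL p ν k) (q : Idx p ν) :
    ∃ m : ℤ, Bf p ν x (Dv p ν q) = m := by
  induction hx using AddSubgroup.closure_induction with
  | mem y hy =>
    rcases hy with ⟨q', rfl⟩ | rfl
    · rw [Bf_Dv_right]
      simp only [Dv, Pi.single_apply, ite_mul, one_mul, zero_mul, Finset.sum_ite_eq',
        Finset.mem_univ, if_true]
      unfold gram
      split_ifs
      exacts [⟨-2, by norm_num⟩, ⟨1, by norm_num⟩, ⟨0, by norm_num⟩, ⟨0, by norm_num⟩]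
    · rw [Bf_varpi_Dv]
      split_ifs
      exacts [⟨-k q.1, by norm_num⟩, ⟨0, by norm_num⟩]
  | zero => exact ⟨0, by simp⟩
  | add y z _ _ hy hz =>
    obtain ⟨m, hm⟩ := hy
    obtain ⟨n, hn⟩ := hz
    exact ⟨m + n, by rw [map_add, LinearMap.add_apply, hm, hn, Int.cast_add]⟩
  | neg y _ hy =>
    obtain ⟨m, hm⟩ := hy
    exact ⟨-m, by rw [map_neg, LinearMap.neg_apply, hm, Int.cast_neg]⟩

lemma rho_mem_NL_of_odd (hp : Odd p) : rho p ν ∈ NL p ν k := by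
  have hdvd : ∀ n ≤ p, 2 ∣ n * (p - n) := fun n hn => by
    rcases Nat.even_or_odd n with hn' | hn'
    · exact hn'.two_dvd.mul_right _
    · exact (Nat.Odd.sub_odd hp hn').two_dvd.mul_left _
  convert intCast_comp_mem_NL (k := k) (fun q => -(((q.2 + 1) * (p - (q.2 + 1)) / 2 : ℕ) : ℤ))
    using 1
  ext ⟨i, j⟩
  have := j.2
  rw [Int.cast_neg, Int.cast_natCast, Nat.cast_div (hdvd _ (by omega)) two_ne_zero,
    Nat.cast_mul, Nat.cast_sub (by omega)]
  simp [rho]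

lemma rho_two_eq_neg_varpi (hk : ∀ i, k i = 1) : rho 2 ν = -varpi 2 ν k := by
  ext ⟨i, j⟩
  simp [rho, varpi, hk]
  norm_num

lemma BW_apply (u v : Wt p ν) :
    BW p ν u v = Bf p ν u.1 v.1 - (u.2.2 / p) * Bf p ν (rho p ν) v.1
      - (v.2.2 / p) * Bf p ν (rho p ν) u.1 + u.2.1 * v.2.2 + v.2.1 * u.2.2
      - 2 * u.2.2 * v.2.2 := rfl

lemma iMap_zero : iMap p ν 0 = 0 := by
  simp [iMap]

lemma iMap_add (x y : Idx p ν → ℚ) : iMap p ν (x + y) = iMap p ν x + iMap p ν y := by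
  simp [iMap, mul_add]

lemma iMap_smul (c : ℚ) (x : Idx p ν → ℚ) : iMap p ν (c • x) = c • iMap p ν x := by
  simp [iMap, mul_left_comm]

lemma fvec_mem_KL : fvec p ν ∈ KL p ν k :=
  AddSubgroup.subset_closure (Or.inr (Or.inl rfl))

lemma mem_KL_iff {y : Wt p ν} :
    y ∈ KL p ν k ↔ ∃ x ∈ NL p ν k, ∃ a b : ℤ,
      y = iMap p ν x + (a : ℚ) • svec p ν + (b : ℚ) • fvec p ν := by
  constructor
  · intro hy
    induction hy using AddSubgroup.closure_induction with
    | mem z hz =>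
      rcases hz with ⟨x, hx, rfl⟩ | rfl | rfl
      · exact ⟨x, hx, 0, 0, by simp⟩
      · exact ⟨0, zero_mem _, 0, 1, by simp [iMap_zero]⟩
      · exact ⟨0, zero_mem _, 1, 0, by simp [iMap_zero]⟩
    | zero => exact ⟨0, zero_mem _, 0, 0, by simp [iMap_zero]⟩
    | add u v _ _ hu hv =>
      obtain ⟨x, hx, a, b, rfl⟩ := hu
      obtain ⟨x', hx', a', b', rfl⟩ := hv
      exact ⟨x + x', add_mem hx hx', a + a', b + b', by rw [iMap_add]; push_cast; module⟩
    | neg u _ hu =>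
      obtain ⟨x, hx, a, b, rfl⟩ := hu
      refine ⟨-x, neg_mem hx, -a, -b, ?_⟩
      rw [← neg_one_smul ℚ x, iMap_smul]
      push_cast
      module
  · rintro ⟨x, hx, a, b, rfl⟩
    simp only [Int.cast_smul_eq_zsmul]
    refine add_mem (add_mem ?_ (zsmul_mem ?_ a)) (zsmul_mem fvec_mem_KL b) <;>
      apply AddSubgroup.subset_closure
    exacts [Or.inl ⟨x, hx, rfl⟩, Or.inr (Or.inr rfl)]

lemma BW_iMap_add_smul_iMap (x z : Idx p ν → ℚ) (a b : ℚ) :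
    BW p ν (iMap p ν x + a • svec p ν + b • fvec p ν) (iMap p ν z) = Bf p ν x z := by
  simp [BW_apply, iMap, svec, fvec]
  ring

lemma BW_iMap_add_smul_inclV (x z : Idx p ν → ℚ) (a b : ℚ) :
    BW p ν (iMap p ν x + a • svec p ν + b • fvec p ν) (inclV p ν z) =
      Bf p ν x z - a / p * Bf p ν (rho p ν) z := by
  simp [BW_apply, iMap, svec, fvec, inclV]

lemma BW_iMap_fvec (x : Idx p ν → ℚ) : BW p ν (iMap p ν x) (fvec p ν) = 0 := by
  simp [BW_apply, iMap, fvec]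

lemma BW_iMap_svec_add_fvec (x : Idx p ν → ℚ) :
    BW p ν (iMap p ν x) (svec p ν + fvec p ν) = 0 := by
  simp [BW_apply, iMap, svec, fvec]

lemma BW_svec_add_fvec_self : BW p ν (svec p ν + fvec p ν) (svec p ν + fvec p ν) = 0 := by
  simp [BW_apply, svec, fvec]
  norm_num

lemma BW_fvec_self : BW p ν (fvec p ν) (fvec p ν) = 0 := by
  simp [BW_apply, fvec]

lemma BW_svec_add_fvec_fvec : BW p ν (svec p ν + fvec p ν) (fvec p ν) = 1 := by
  simp [BW_apply, svec, fvec]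

theorem orthogonal_iMap_NL_iff (y : Wt p ν) :
    (y ∈ KL p ν k ∧ ∀ x ∈ NL p ν k, BW p ν y (iMap p ν x) = 0) ↔
      ∃ a b : ℤ, y = (a : ℚ) • (svec p ν + fvec p ν) + (b : ℚ) • fvec p ν := by
  constructor
  · rintro ⟨hy, hperp⟩
    obtain ⟨x, -, a, b, rfl⟩ := mem_KL_iff.mp hy
    have hx : x = 0 := eq_zero_of_forall_Bf_Dv_eq_zero fun q => by
      rw [← hperp _ (Dv_mem_NL q), BW_iMap_add_smul_iMap]
    exact ⟨a, b - a, by rw [hx, iMap_zero]; push_cast; module⟩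
  · rintro ⟨a, b, rfl⟩
    have hy : (a : ℚ) • (svec p ν + fvec p ν) + (b : ℚ) • fvec p ν =
        iMap p ν 0 + (a : ℚ) • svec p ν + ((a + b : ℤ) : ℚ) • fvec p ν := by
      rw [iMap_zero]; push_cast; module
    refine ⟨mem_KL_iff.mpr ⟨0, zero_mem _, a, a + b, hy⟩, fun x _ => ?_⟩
    rw [hy, BW_iMap_add_smul_iMap, map_zero, LinearMap.zero_apply]

lemma exists_iMap_add_of_mem_KL {y : Wt p ν} (hy : y ∈ KL p ν k) :
    ∃ x ∈ NL p ν k, ∃ a b : ℤ,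
      y = iMap p ν x + (a : ℚ) • (svec p ν + fvec p ν) + (b : ℚ) • fvec p ν := by
  obtain ⟨x, hx, a, b, rfl⟩ := mem_KL_iff.mp hy
  exact ⟨x, hx, a, b - a, by push_cast; module⟩

lemma inclV_mem_KL_of_mem_LL (hp : p ≠ 0) {x : Idx p ν → ℚ} (hx : x ∈ LL p ν k) :
    inclV p ν x ∈ KL p ν k := by
  obtain ⟨hxN, m, hm⟩ := hx
  refine mem_KL_iff.mpr ⟨x, hxN, 0, -m, ?_⟩
  simp [inclV, iMap, fvec, hm, hp]

lemma natCast_smul_Dv_mem_LL (q : Idx p ν) : (p : ℚ) • Dv p ν q ∈ LL p ν k := by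
  refine ⟨?_, 1, by rw [map_smul, Bf_rho_Dv, smul_eq_mul, mul_one, Int.cast_one, mul_one]⟩
  rw [← Int.cast_natCast, Int.cast_smul_eq_zsmul]
  exact zsmul_mem (Dv_mem_NL q) _

lemma BW_fvec_inclV (z : Idx p ν → ℚ) : BW p ν (fvec p ν) (inclV p ν z) = 0 := by
  simp [BW_apply, fvec, inclV]

lemma BW_evec_inclV (hp : p ≠ 0) (z : Idx p ν → ℚ) : BW p ν (evec p ν) (inclV p ν z) = 0 := by
  simp [BW_apply, evec, svec, fvec, inclV, hp]

lemma BW_evec_fvec : BW p ν (evec p ν) (fvec p ν) = p := by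
  simp [BW_apply, evec, svec, fvec, inclV]

lemma BW_evec_self (hρρ : Bf p ν (rho p ν) (rho p ν) = -2 * p * (p - 1)) :
    BW p ν (evec p ν) (evec p ν) = 0 := by
  simp [BW_apply, evec, svec, fvec, inclV, hρρ]
  field_simp
  ring

lemma evec_eq_iMap_rho (hp : p ≠ 0) (hρρ : Bf p ν (rho p ν) (rho p ν) = -2 * p * (p - 1)) :
    evec p ν = iMap p ν (rho p ν) + (p : ℚ) • svec p ν + (2 * p - 1 : ℚ) • fvec p ν := by
  simp [evec, iMap, svec, fvec, inclV, hρρ]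
  field_simp
  ring

lemma evec_mem_KL (hp : p ≠ 0) (hρ : rho p ν ∈ NL p ν k)
    (hρρ : Bf p ν (rho p ν) (rho p ν) = -2 * p * (p - 1)) : evec p ν ∈ KL p ν k :=
  mem_KL_iff.mpr ⟨rho p ν, hρ, p, 2 * p - 1, by rw [evec_eq_iMap_rho hp hρρ]; push_cast; rfl⟩

theorem orthogonal_LL_iff (hp : 2 ≤ p) (hν : 0 < ν) (hρ : rho p ν ∈ NL p ν k)
    (hρρ : Bf p ν (rho p ν) (rho p ν) = -2 * p * (p - 1)) (y : Wt p ν) :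
    (y ∈ KL p ν k ∧ ∀ x ∈ LL p ν k, BW p ν y (inclV p ν x) = 0) ↔
      ∃ a b : ℤ, y = (a : ℚ) • evec p ν + (b : ℚ) • fvec p ν := by
  have hp0 : (p : ℚ) ≠ 0 := by norm_cast; omega
  constructor
  · rintro ⟨hy, hperp⟩
    obtain ⟨x, hx, a, b, rfl⟩ := mem_KL_iff.mp hy
    have hxD : ∀ q, Bf p ν x (Dv p ν q) = a / p := fun q => by
      have h := hperp _ (natCast_smul_Dv_mem_LL q)
      rw [BW_iMap_add_smul_inclV, map_smul, map_smul, Bf_rho_Dv, smul_eq_mul, smul_eq_mul] at h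
      field_simp at h ⊢
      linear_combination h
    obtain ⟨n, hn⟩ := exists_int_Bf_Dv_of_mem_NL hx (⟨0, hν⟩, ⟨0, by omega⟩)
    have ha : (a : ℚ) = p * n := by
      rw [hxD, div_eq_iff hp0] at hn
      linear_combination hn
    have hx' : x = (n : ℚ) • rho p ν :=
      sub_eq_zero.mp <| eq_zero_of_forall_Bf_Dv_eq_zero fun q => by
        rw [map_sub, LinearMap.sub_apply, map_smul, LinearMap.smul_apply, hxD, Bf_rho_Dv, ha]
        field_simp
        ring
    refine ⟨n, b + n * (1 - 2 * p), ?_⟩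
    rw [hx', iMap_smul, evec_eq_iMap_rho (by omega) hρρ, ha]
    push_cast
    module
  · rintro ⟨a, b, rfl⟩
    refine ⟨?_, fun x _ => ?_⟩
    · simp only [Int.cast_smul_eq_zsmul]
      exact add_mem (zsmul_mem (evec_mem_KL (by omega) hρ hρρ) a)
        (zsmul_mem fvec_mem_KL b)
    · simp [BW_evec_inclV (show p ≠ 0 by omega), BW_fvec_inclV]

lemma two_le_of_goodCase (hk : goodCase p ν k) : 2 ≤ p := by
  rcases hk with ⟨rfl, -⟩ | ⟨rfl, -⟩ | ⟨rfl, -⟩ | ⟨rfl, -⟩ <;> norm_num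

lemma mul_succ_eq_of_goodCase (hk : goodCase p ν k) : ν * (p + 1) = 24 := by
  rcases hk with ⟨rfl, rfl, -⟩ | ⟨rfl, rfl, -⟩ | ⟨rfl, rfl, -⟩ | ⟨rfl, rfl, -⟩ <;> norm_num

lemma rho_mem_NL_of_goodCase (hk : goodCase p ν k) : rho p ν ∈ NL p ν k := by
  rcases hk with ⟨rfl, rfl, hk⟩ | ⟨rfl, -⟩ | ⟨rfl, -⟩ | ⟨rfl, -⟩
  · rw [rho_two_eq_neg_varpi (k := k) fun i => by rw [hk]; fin_cases i <;> rfl]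
    exact neg_mem (AddSubgroup.subset_closure (Or.inr rfl))
  all_goals exact rho_mem_NL_of_odd (by decide)

lemma Bf_rho_rho_of_mul_succ_eq (hν : ν * (p + 1) = 24) :
    Bf p ν (rho p ν) (rho p ν) = -2 * p * (p - 1) := by
  have h : (ν : ℚ) * (p + 1) = 24 := by exact_mod_cast hν
  rw [Bf_rho_rho]
  linear_combination (-(p - 1) * p / 12 : ℚ) * h

end Nikulin

/-- In `K = K_p`: the orthogonal complement of `i(N)` is the hyperbolic plane `ℤ(s+f) + ℤf`, `K = i(N) ⊥ U`, `L ⊆ K`, and the orthogonal complement of `L` in `K` is `ℤe′ + ℤf ≅ U(p)`. -/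
theorem Kp_orthogonal_decompositions (p ν : ℕ) (k : Fin ν → ℤ) (hk : goodCase p ν k) :
    -- (a) orthogonal complement of i(N) in K is ℤ(s+f) + ℤf
    (∀ y : Wt p ν,
      (y ∈ KL p ν k ∧ ∀ x ∈ NL p ν k, BW p ν y (iMap p ν x) = 0) ↔
        ∃ a b : ℤ, y = (a : ℚ) • (svec p ν + fvec p ν) + (b : ℚ) • fvec p ν) ∧
    BW p ν (svec p ν + fvec p ν) (svec p ν + fvec p ν) = 0 ∧
    BW p ν (fvec p ν) (fvec p ν) = 0 ∧
    BW p ν (svec p ν + fvec p ν) (fvec p ν) = 1 ∧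
    (∀ y ∈ KL p ν k, ∃ x ∈ NL p ν k, ∃ a b : ℤ,
      y = iMap p ν x + (a : ℚ) • (svec p ν + fvec p ν) + (b : ℚ) • fvec p ν) ∧
    (∀ x ∈ NL p ν k, BW p ν (iMap p ν x) (fvec p ν) = 0 ∧
      BW p ν (iMap p ν x) (svec p ν + fvec p ν) = 0) ∧
    -- (b) L ⊆ K and the orthogonal complement of L in K is ℤe' + ℤf ≅ U(p)
    (∀ x ∈ LL p ν k, inclV p ν x ∈ KL p ν k) ∧
    (∀ y : Wt p ν,
      (y ∈ KL p ν k ∧ ∀ x ∈ LL p ν k, BW p ν y (inclV p ν x) = 0) ↔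
        ∃ a b : ℤ, y = (a : ℚ) • evec p ν + (b : ℚ) • fvec p ν) ∧
    BW p ν (evec p ν) (evec p ν) = 0 ∧
    BW p ν (evec p ν) (fvec p ν) = (p : ℚ) := by
  have hp := two_le_of_goodCase hk
  have h24 := mul_succ_eq_of_goodCase hk
  have hν : 0 < ν := Nat.pos_of_ne_zero fun h => by simp [h] at h24
  have hρρ := Bf_rho_rho_of_mul_succ_eq h24
  exact ⟨orthogonal_iMap_NL_iff, BW_svec_add_fvec_self, BW_fvec_self, BW_svec_add_fvec_fvec,
    fun y hy => exists_iMap_add_of_mem_KL hy,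
    fun x _ => ⟨BW_iMap_fvec x, BW_iMap_svec_add_fvec x⟩,
    fun x hx => inclV_mem_KL_of_mem_LL (by omega) hx,
    orthogonal_LL_iff hp hν (rho_mem_NL_of_goodCase hk) hρρ,
    BW_evec_self hρρ, BW_evec_fvec⟩
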